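/- arXiv:2411.13780 — 7 statements merged into one kernel-verified Lean document; each statement's English description precedes it below -/
import Mathlib

section
/- Let $\lambda > 0$, let $f : (-\infty, 0] \to \mathbb{R}$ be a continuous function (playing the role of $t \mapsto a(\gamma(t))$), and suppose that $\sup_{t>0} \int_{-t}^0 e^{-\lambda \int_s^0 f(\tau)\,d\tau}\,ds < +\infty$ and that $f$ is bounded, $|f| \le K$. Then $e^{-\lambda \int_{-t}^0 f(\tau)\,d\tau} \to 0$ as $t \to +\infty$. -/
open Real MeasureTheory

theorem stmt_1 (lam K : ℝ) (hlam : 0 < lam) (f : ℝ → ℝ)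
    (hcont : Continuous f) (hbound : ∀ t, |f t| ≤ K)
    (hsup : ∃ C : ℝ, ∀ t > 0, (∫ s in (-t)..0, Real.exp (-lam * ∫ τ in s..0, f τ)) ≤ C) :
    Filter.Tendsto (fun t => Real.exp (-lam * ∫ s in (-t)..0, f s))
      Filter.atTop (nhds 0) := by
  obtain ⟨C, hC⟩ := hsup
  have hK : 0 ≤ K := le_trans (abs_nonneg _) (hbound 0)
  have hint : ∀ a b : ℝ, IntervalIntegrable f volume a b :=
    fun a b => hcont.intervalIntegrable a b
  set F : ℝ → ℝ := fun s => Real.exp (-lam * ∫ τ in s..0, f τ) with hFdef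
  have hFcont : Continuous F := by
    apply Real.continuous_exp.comp
    apply Continuous.mul continuous_const
    have h1 : Continuous fun s => ∫ τ in (0:ℝ)..s, f τ :=
      intervalIntegral.continuous_primitive hint 0
    have : (fun s => ∫ τ in s..(0:ℝ), f τ) = fun s => -∫ τ in (0:ℝ)..s, f τ := by
      funext s; rw [intervalIntegral.integral_symm]
    rw [this]
    exact h1.neg
  have hFint : ∀ a b : ℝ, IntervalIntegrable F volume a b :=
    fun a b => hFcont.intervalIntegrable a b
  have hFpos : ∀ s, 0 < F s := fun s => Real.exp_pos _
  set A : ℝ → ℝ := fun t => ∫ s in (-t)..0, F s with hAdef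
  have hAdiff : ∀ t t' : ℝ, A t' - A t = ∫ s in (-t')..(-t), F s := by
    intro t t'
    have := intervalIntegral.integral_add_adjacent_intervals
      (hFint (-t') (-t)) (hFint (-t) 0)
    simp only [hAdef]
    linarith [this]
  have hAmono : Monotone A := by
    intro t t' htt'
    have h1 : A t' - A t = ∫ s in (-t')..(-t), F s := hAdiff t t'
    have h2 : 0 ≤ ∫ s in (-t')..(-t), F s :=
      intervalIntegral.integral_nonneg (by linarith) (fun x _ => (hFpos x).le)
    linarith
  have hAbdd : BddAbove (Set.range A) := by
    refine ⟨C, ?_⟩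
    rintro _ ⟨t, rfl⟩
    calc A t ≤ A (max t 1) := hAmono (le_max_left _ _)
    _ ≤ C := hC _ (lt_of_lt_of_le zero_lt_one (le_max_right _ _))
  have hL : Filter.Tendsto A Filter.atTop (nhds (⨆ t, A t)) :=
    tendsto_atTop_ciSup hAmono hAbdd
  have hL1 : Filter.Tendsto (fun t => A (t + 1)) Filter.atTop (nhds (⨆ t, A t)) :=
    hL.comp (Filter.tendsto_atTop_add_const_right _ 1 Filter.tendsto_id)
  have hdiff0 : Filter.Tendsto (fun t => A (t + 1) - A t) Filter.atTop (nhds 0) := by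
    have := hL1.sub hL
    simpa using this
  -- key pointwise bound: F (-t) ≤ exp (lam * K) * (A (t+1) - A t)
  have key : ∀ t : ℝ, F (-t) ≤ Real.exp (lam * K) * (A (t + 1) - A t) := by
    intro t
    have hlow : ∀ s ∈ Set.Icc (-(t+1)) (-t), F (-t) * Real.exp (-(lam * K)) ≤ F s := by
      intro s hs
      obtain ⟨hs1, hs2⟩ := hs
      have hsplit : (∫ τ in s..(0:ℝ), f τ) = (∫ τ in s..(-t), f τ) + ∫ τ in (-t)..0, f τ :=
        (intervalIntegral.integral_add_adjacent_intervals (hint s (-t)) (hint (-t) 0)).symm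
      have hest : |∫ τ in s..(-t), f τ| ≤ K * |(-t) - s| := by
        have := intervalIntegral.norm_integral_le_of_norm_le_const
          (C := K) (f := f) (a := s) (b := -t) (fun x _ => hbound x)
        simpa [Real.norm_eq_abs] using this
      have habs : |(-t) - s| ≤ 1 := by
        rw [abs_of_nonneg (by linarith)]; linarith
      have hest2 : |∫ τ in s..(-t), f τ| ≤ K :=
        le_trans hest (by nlinarith)
      have : F s = Real.exp (-lam * ∫ τ in s..(-t), f τ) * F (-t) := by
        simp only [hFdef, hsplit, ← Real.exp_add]
        ring_nf
      rw [this, mul_comm (F (-t))]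
      apply mul_le_mul_of_nonneg_right _ (hFpos _).le
      apply Real.exp_le_exp.mpr
      have h1 : -(lam * K) ≤ -lam * ∫ τ in s..(-t), f τ := by
        have := (abs_le.mp hest2).2
        nlinarith
      exact h1
    have hA1 : A (t + 1) - A t = ∫ s in (-(t+1))..(-t), F s := hAdiff t (t + 1)
    have hle : F (-t) * Real.exp (-(lam * K)) * ((-t) - (-(t+1)))
        ≤ ∫ s in (-(t+1))..(-t), F s := by
      have hmono := intervalIntegral.integral_mono_on (a := -(t+1)) (b := -t)
        (by linarith) (intervalIntegrable_const) (hFint _ _) hlow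
      have hconst : (∫ _ in (-(t+1))..(-t), F (-t) * Real.exp (-(lam * K)))
          = ((-t) - (-(t+1))) * (F (-t) * Real.exp (-(lam * K))) := by
        simp [intervalIntegral.integral_const, smul_eq_mul]
      rw [hconst] at hmono
      linarith [hmono]
    have hsimp : ((-t) - (-(t+1))) = (1:ℝ) := by ring
    rw [hsimp, mul_one] at hle
    rw [hA1]
    have hepos : 0 < Real.exp (-(lam * K)) := Real.exp_pos _
    calc F (-t) = Real.exp (lam * K) * (F (-t) * Real.exp (-(lam * K))) := by
          rw [← mul_assoc, mul_comm (Real.exp (lam*K)), mul_assoc,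
            ← Real.exp_add]; simp
      _ ≤ Real.exp (lam * K) * ∫ s in (-(t+1))..(-t), F s :=
          mul_le_mul_of_nonneg_left hle (Real.exp_pos _).le
  have hfin : Filter.Tendsto (fun t => Real.exp (lam * K) * (A (t + 1) - A t))
      Filter.atTop (nhds 0) := by
    have := hdiff0.const_mul (Real.exp (lam * K))
    simpa using this
  apply squeeze_zero (fun t => (Real.exp_pos _).le) (fun t => key t) hfin
end

section
/- Let $(M, d)$ be a compact geodesic metric space with diameter $\overline{D}$, let $K > 0$, $C_L > 0$, $c_0 \in \mathbb{R}$, and let $\lambda \in (0,1)$. Let $w_\lambda : M \to \mathbb{R}$ satisfy: for every constant-speed geodesic $\zeta : [0, d] \to M$ (with $d = d(\zeta(0), \zeta(d))$) and every $s \in [0,d]$, $$w_\lambda(\zeta(s)) \le m_\lambda + (C_L + \lambda K |m_\lambda|)\,d + \lambda K \int_0^s \big(w_\lambda(\zeta(\tau)) - m_\lambda\big)\,d\tau,$$ where $m_\lambda = \min_M w_\lambda$. Then, with $A_+ = \max(C_L, K)\,\overline{D}\,e^{K \overline{D}}$, $$\max_{x \in M} w_\lambda(x) \le \min_{x \in M}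 w_\lambda(x) + A_+\big(1 + \lambda \min_{x\in M}|w_\lambda(x)|\big).$$ -/
/-!
Along a unit-speed geodesic `ζ` from a minimum point `x₀` to `x`, the function
`g τ = w (ζ τ) - m` satisfies the linear integral inequality `g s ≤ a + λK ∫₀ˢ g`, with
`a = (C_L + λK|m|) d`. Grönwall's lemma in integral form turns this into
`w x - m = g d ≤ a e^{λK d}`, and `d ≤ D̄`, `λ < 1` bound the right-hand side by `A₊ (1 + λ|m|)`.
-/

open Real MeasureTheory Set

theorem add_mul_gronwallBound_zero (a b s : ℝ) :
    a + b * gronwallBound 0 b a s = a * exp (b * s) := by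
  rcases eq_or_ne b 0 with rfl | hb
  · simp [gronwallBound_K0]
  · rw [gronwallBound_of_K_ne_0 hb]
    field_simp
    ring

theorem le_mul_exp_of_le_add_mul_integral_of_continuous {g : ℝ → ℝ} {a b d : ℝ}
    (hg : Continuous g) (hb : 0 ≤ b)
    (h : ∀ s ∈ Icc 0 d, g s ≤ a + b * ∫ τ in (0 : ℝ)..s, g τ) :
    ∀ s ∈ Icc 0 d, g s ≤ a * exp (b * s) := by
  set F : ℝ → ℝ := fun s => ∫ τ in (0 : ℝ)..s, g τ
  have hF : ∀ s, HasDerivAt F (g s) s := fun s =>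
    (hg.integral_hasStrictDerivAt 0 s).hasDerivAt
  have hF_le : ∀ s ∈ Icc 0 d, F s ≤ gronwallBound 0 b a (s - 0) :=
    le_gronwallBound_of_liminf_deriv_right_le
      (continuous_iff_continuousAt.2 fun s => (hF s).continuousAt).continuousOn
      (fun s _ _ hr => (hF s).hasDerivWithinAt.liminf_right_slope_le hr)
      (by simp [F]) (fun s hs => by linarith [h s (Ico_subset_Icc_self hs)])
  intro s hs
  calc g s ≤ a + b * F s := h s hs
    _ ≤ a + b * gronwallBound 0 b a s := by
        gcongr
        simpa using hF_le s hs
    _ = a * exp (b * s) := add_mul_gronwallBound_zero a b s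

theorem le_mul_exp_of_le_add_mul_integral {g : ℝ → ℝ} {a b d : ℝ}
    (hg : ContinuousOn g (Icc 0 d)) (hb : 0 ≤ b)
    (h : ∀ s ∈ Icc 0 d, g s ≤ a + b * ∫ τ in (0 : ℝ)..s, g τ) :
    ∀ s ∈ Icc 0 d, g s ≤ a * exp (b * s) := by
  intro s hs
  have hd : 0 ≤ d := hs.1.trans hs.2
  set G : ℝ → ℝ := fun τ => g (projIcc 0 d hd τ)
  have hG : Continuous G :=
    hg.comp_continuous (continuous_subtype_val.comp continuous_projIcc) fun τ => Subtype.prop _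
  have hGg : EqOn G g (Icc 0 d) := fun τ hτ => by simp [G, projIcc_of_mem hd hτ]
  have hint : ∀ s ∈ Icc 0 d, ∫ τ in (0 : ℝ)..s, G τ = ∫ τ in (0 : ℝ)..s, g τ := fun s hs =>
    intervalIntegral.integral_congr <| hGg.mono <| by
      rw [uIcc_of_le hs.1]; exact Icc_subset_Icc_right hs.2
  have := le_mul_exp_of_le_add_mul_integral_of_continuous hG hb
    (fun s hs => by rw [hint s hs, hGg hs]; exact h s hs) s hs
  rwa [hGg hs] at this

theorem LipschitzOnWith.of_dist_eq_abs_sub {M : Type*} [PseudoMetricSpace M] {ζ : ℝ → M}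
    {s : Set ℝ} (hζ : ∀ a ∈ s, ∀ b ∈ s, dist (ζ a) (ζ b) = |a - b|) : LipschitzOnWith 1 ζ s :=
  LipschitzOnWith.of_dist_le_mul fun a ha b hb => by simp [hζ a ha b hb, Real.dist_eq]

theorem stmt_4_general {M : Type*} [MetricSpace M]
    (Dbar K CL lam mlam : ℝ)
    (hD : ∀ x y : M, dist x y ≤ Dbar)
    (hK : 0 < K) (hCL : 0 < CL) (hlam : lam ∈ Set.Ioo (0:ℝ) 1)
    (w : M → ℝ) (hw : Continuous w)
    (hmin' : ∃ x, w x = mlam)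
    (hgeod : ∀ x y : M, ∃ ζ : ℝ → M, ζ 0 = x ∧ ζ (dist x y) = y ∧
      ∀ s ∈ Set.Icc 0 (dist x y), ∀ t ∈ Set.Icc 0 (dist x y), dist (ζ s) (ζ t) = |s - t|)
    (hdom : ∀ (d : ℝ) (ζ : ℝ → M), 0 ≤ d →
      (∀ s ∈ Set.Icc 0 d, ∀ t ∈ Set.Icc 0 d, dist (ζ s) (ζ t) = |s - t|) →
      ∀ s ∈ Set.Icc 0 d,
        w (ζ s) ≤ mlam + (CL + lam * K * |mlam|) * d
          + lam * K * ∫ τ in (0:ℝ)..s, (w (ζ τ) - mlam)) :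
    ∀ x : M, w x ≤ mlam + (max CL K * Dbar * Real.exp (K * Dbar)) * (1 + lam * |mlam|) := by
  intro x
  obtain ⟨x₀, -⟩ := hmin'
  obtain ⟨ζ, -, hζx, hζ⟩ := hgeod x₀ x
  set d := dist x₀ x
  have hd : 0 ≤ d := dist_nonneg
  have hdD : d ≤ Dbar := hD x₀ x
  have hD0 : 0 ≤ Dbar := hd.trans hdD
  have hlam0 : 0 < lam := hlam.1
  have hgronwall := le_mul_exp_of_le_add_mul_integral (g := fun τ => w (ζ τ) - mlam)
    (a := (CL + lam * K * |mlam|) * d) (b := lam * K)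
    ((hw.comp_continuousOn (LipschitzOnWith.of_dist_eq_abs_sub hζ).continuousOn).sub
      continuousOn_const) (by positivity)
    (fun s hs => by linarith [hdom d ζ hd hζ s hs]) d ⟨hd, le_rfl⟩
  have hexp : lam * K * d ≤ K * Dbar :=
    (mul_le_mul_of_nonneg_right (mul_le_of_le_one_left hK.le hlam.2.le) hd).trans
      (mul_le_mul_of_nonneg_left hdD hK.le)
  have hcoef : CL + lam * K * |mlam| ≤ max CL K * (1 + lam * |mlam|) := by
    nlinarith [le_max_left CL K,
      mul_nonneg (mul_nonneg hlam0.le (abs_nonneg mlam)) (sub_nonneg.2 (le_max_right CL K))]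
  calc w x ≤ mlam + (CL + lam * K * |mlam|) * d * exp (lam * K * d) := by
        rw [hζx] at hgronwall; linarith
    _ ≤ mlam + max CL K * (1 + lam * |mlam|) * Dbar * exp (K * Dbar) := by gcongr
    _ = mlam + max CL K * Dbar * exp (K * Dbar) * (1 + lam * |mlam|) := by ring

theorem stmt_4 {M : Type*} [MetricSpace M] [CompactSpace M] [Nonempty M]
    (Dbar K CL c0 lam mlam : ℝ)
    (hD : ∀ x y : M, dist x y ≤ Dbar)
    (hK : 0 < K) (hCL : 0 < CL) (hlam : lam ∈ Set.Ioo (0:ℝ) 1)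
    (w : M → ℝ) (hw : Continuous w)
    (hmin : ∀ x, mlam ≤ w x) (hmin' : ∃ x, w x = mlam)
    (hgeod : ∀ x y : M, ∃ ζ : ℝ → M, ζ 0 = x ∧ ζ (dist x y) = y ∧
      ∀ s ∈ Set.Icc 0 (dist x y), ∀ t ∈ Set.Icc 0 (dist x y), dist (ζ s) (ζ t) = |s - t|)
    (hdom : ∀ (d : ℝ) (ζ : ℝ → M), 0 ≤ d →
      (∀ s ∈ Set.Icc 0 d, ∀ t ∈ Set.Icc 0 d, dist (ζ s) (ζ t) = |s - t|) →
      ∀ s ∈ Set.Icc 0 d,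
        w (ζ s) ≤ mlam + (CL + lam * K * |mlam|) * d
          + lam * K * ∫ τ in (0:ℝ)..s, (w (ζ τ) - mlam)) :
    ∀ x : M, w x ≤ mlam + (max CL K * Dbar * Real.exp (K * Dbar)) * (1 + lam * |mlam|) :=
  stmt_4_general Dbar K CL lam mlam hD hK hCL hlam w hw hmin' hgeod hdom
end

section
/- Let $f : (-\infty, 0] \to \mathbb{R}$ be continuous and bounded, $|f| \le \|a\|_\infty$, let $\lambda > 0$, $\epsilon > 0$, $T_0 > 0$, and assume $\int_{-t}^0 f(s)\,ds > \epsilon t$ for all $t \ge T_0$. Then for all $t > T_0$, $$0 < \lambda \int_{-t}^0 e^{-\lambda \int_s^0 f(\tau)\,d\tau}\,ds \le \frac{e^{\lambda \|a\|_\infty T_0} - 1}{\|a\|_\infty} + \frac{e^{-\lambda \epsilon T_0}}{\epsilon} \le \frac{e^{\|a\|_\infty T_0}}{\|a\|_\infty} + \frac{1}{\epsilon}$$ whenever $\lambda \le 1$. -/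
open Real MeasureTheory

lemma int_exp_mul (c a b : ℝ) (hc : c ≠ 0) :
    ∫ s in a..b, Real.exp (c*s) = (Real.exp (c*b) - Real.exp (c*a))/c := by
  have h := intervalIntegral.integral_comp_mul_left (a := a) (b := b) (fun x => Real.exp x) hc
  simp only [smul_eq_mul] at h
  rw [h, integral_exp]
  field_simp

theorem stmt_9 (f : ℝ → ℝ) (A lam eps T0 : ℝ)
    (hf : Continuous f) (hA : 0 < A) (hfA : ∀ t, |f t| ≤ A)
    (hlam : 0 < lam) (hlam1 : lam ≤ 1) (heps : 0 < eps) (hT0 : 0 < T0)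
    (havg : ∀ t ≥ T0, eps * t < ∫ s in (-t)..0, f s) :
    ∀ t > T0,
      (0 < lam * ∫ s in (-t)..0, Real.exp (-lam * ∫ τ in s..0, f τ)) ∧
      lam * (∫ s in (-t)..0, Real.exp (-lam * ∫ τ in s..0, f τ))
        ≤ (Real.exp (lam * A * T0) - 1) / A + Real.exp (-lam * eps * T0) / eps ∧
      (Real.exp (lam * A * T0) - 1) / A + Real.exp (-lam * eps * T0) / eps
        ≤ Real.exp (A * T0) / A + 1 / eps := by
  intro t ht
  have ht0 : 0 < t := lt_trans hT0 ht
  -- continuity of the integrand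
  have hprim : Continuous fun s => ∫ τ in s..0, f τ := by
    have h1 : Continuous fun s => ∫ τ in (0:ℝ)..s, f τ :=
      intervalIntegral.continuous_primitive (fun a b => hf.intervalIntegrable a b) 0
    have : (fun s => ∫ τ in s..0, f τ) = fun s => -(∫ τ in (0:ℝ)..s, f τ) := by
      funext s; rw [intervalIntegral.integral_symm]
    rw [this]; exact h1.neg
  have hg : Continuous fun s => Real.exp (-lam * ∫ τ in s..0, f τ) :=
    (Real.continuous_exp.comp ((continuous_const.mul hprim)))
  -- positivity
  have hpos : 0 < ∫ s in (-t)..0, Real.exp (-lam * ∫ τ in s..0, f τ) := by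
    apply intervalIntegral.intervalIntegral_pos_of_pos_on
      (hg.intervalIntegrable _ _)
    · intro x _; positivity
    · linarith
  refine ⟨mul_pos hlam hpos, ?_, ?_⟩
  · -- main bound
    have hsplit : (∫ s in (-t)..0, Real.exp (-lam * ∫ τ in s..0, f τ))
        = (∫ s in (-t)..(-T0), Real.exp (-lam * ∫ τ in s..0, f τ))
          + ∫ s in (-T0)..0, Real.exp (-lam * ∫ τ in s..0, f τ) := by
      rw [intervalIntegral.integral_add_adjacent_intervals
        (hg.intervalIntegrable _ _) (hg.intervalIntegrable _ _)]
    -- bound on [-T0, 0]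
    have hb1 : (∫ s in (-T0)..0, Real.exp (-lam * ∫ τ in s..0, f τ))
        ≤ ∫ s in (-T0)..0, Real.exp (-(lam*A) * s) := by
      apply intervalIntegral.integral_mono_on (by linarith) (hg.intervalIntegrable _ _)
        (((Real.continuous_exp.comp (continuous_const.mul continuous_id))).intervalIntegrable _ _)
      intro s hs
      rcases hs with ⟨hs1, hs2⟩
      apply Real.exp_le_exp.mpr
      have hnorm : ‖∫ τ in s..0, f τ‖ ≤ A * |0 - s| := by
        apply intervalIntegral.norm_integral_le_of_norm_le_const
        intro x _
        rw [Real.norm_eq_abs]; exact hfA x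
      rw [Real.norm_eq_abs, abs_of_nonneg (by linarith : (0:ℝ) ≤ 0 - s), abs_le] at hnorm
      show -lam * (∫ τ in s..0, f τ) ≤ -(lam*A) * s
      nlinarith [hnorm.1, mul_le_mul_of_nonneg_left hnorm.1 hlam.le]
    -- bound on [-t, -T0]
    have hb2 : (∫ s in (-t)..(-T0), Real.exp (-lam * ∫ τ in s..0, f τ))
        ≤ ∫ s in (-t)..(-T0), Real.exp ((lam*eps) * s) := by
      apply intervalIntegral.integral_mono_on (by linarith) (hg.intervalIntegrable _ _)
        (((Real.continuous_exp.comp (continuous_const.mul continuous_id))).intervalIntegrable _ _)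
      intro s hs
      rcases hs with ⟨hs1, hs2⟩
      apply Real.exp_le_exp.mpr
      have h1 : eps * (-s) < ∫ τ in s..0, f τ := by
        have := havg (-s) (by linarith)
        rwa [neg_neg] at this
      show -lam * (∫ τ in s..0, f τ) ≤ (lam*eps) * s
      nlinarith [mul_le_mul_of_nonneg_left h1.le hlam.le]
    have hc1 : ∫ s in (-T0)..0, Real.exp (-(lam*A) * s)
        = (1 - Real.exp (lam*A*T0))/(-(lam*A)) := by
      rw [int_exp_mul _ _ _ (neg_ne_zero.mpr (by positivity) : -(lam*A) ≠ 0)]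
      norm_num
    have hc2 : ∫ s in (-t)..(-T0), Real.exp ((lam*eps) * s)
        = (Real.exp (-lam*eps*T0) - Real.exp (-lam*eps*t))/(lam*eps) := by
      rw [int_exp_mul _ _ _ (by positivity : lam*eps ≠ 0)]
      ring_nf
    have hlamA : 0 < lam * A := by positivity
    have hlame : 0 < lam * eps := by positivity
    have hkey1 : lam * ((1 - Real.exp (lam*A*T0))/(-(lam*A)))
        = (Real.exp (lam*A*T0) - 1)/A := by
      field_simp
      ring
    have hkey2 : lam * ((Real.exp (-lam*eps*T0) - Real.exp (-lam*eps*t))/(lam*eps))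
        ≤ Real.exp (-lam * eps * T0)/eps := by
      have heq : lam * ((Real.exp (-lam*eps*T0) - Real.exp (-lam*eps*t))/(lam*eps))
          = (Real.exp (-lam*eps*T0) - Real.exp (-lam*eps*t))/eps := by
        field_simp
      rw [heq, div_le_div_iff₀ heps heps]
      nlinarith [Real.exp_pos (-lam*eps*t)]
    calc lam * (∫ s in (-t)..0, Real.exp (-lam * ∫ τ in s..0, f τ))
        ≤ lam * ((∫ s in (-t)..(-T0), Real.exp ((lam*eps) * s))
            + ∫ s in (-T0)..0, Real.exp (-(lam*A) * s)) := by
          rw [hsplit]; apply mul_le_mul_of_nonneg_left (by linarith) hlam.le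
      _ = lam * ((Real.exp (-lam*eps*T0) - Real.exp (-lam*eps*t))/(lam*eps))
            + lam * ((1 - Real.exp (lam*A*T0))/(-(lam*A))) := by
          rw [hc1, hc2]; ring
      _ ≤ (Real.exp (lam * A * T0) - 1) / A + Real.exp (-lam * eps * T0) / eps := by
          rw [hkey1]; linarith [hkey2]
  · have e1 : Real.exp (lam*A*T0) ≤ Real.exp (A*T0) := Real.exp_le_exp.mpr (by nlinarith [mul_pos hA hT0])
    have e2 : Real.exp (-lam*eps*T0) ≤ 1 := Real.exp_le_one_iff.mpr (by nlinarith [mul_pos heps hT0, mul_pos (mul_pos hlam heps) hT0])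
    gcongr <;> linarith
end

section
/- Let $(M, d)$ be a compact geodesic metric space with diameter $\overline{D}$, $\lambda \in (0,1)$, and let $a : M \to \mathbb{R}$ be continuous with $\|a\|_\infty > 0$. Let $L : TM \to \mathbb{R}$ be such that $C_L := \sup\{|L(x,v) + c_0| : \|v\|_x \le 1\} < \infty$. Suppose $w : M \to \mathbb{R}$ is bounded and satisfies the dynamic programming inequality: for every unit-speed geodesic $\zeta : [-d, 0] \to M$ from $y$ to $x$ with $d = d(x,y)$, $$w(x) - e^{-\lambda \int_{-d}^0 a(\zeta(\tau))\,d\tau} w(y) \le \int_{-d}^0 e^{-\lambda \int_s^0 a(\zeta(\tau))\,d\tau}\,(L(\zeta(s), \dot\zeta(s)) + c_0)\,ds.$$ Then $w$ is Lipschitz continuous, with a Lipschitz constant depending only on $C_L$, $\|a\|_\infty$, $\overline{D}$ and $\|w\|_\infty$; concretely, $$|w(x) - w(y)| \le (\|a\|_\infty \|w\|_\infty + C_L) \cdot \frac{e^{\lambda \|a\|_\infty d(x,y)} - 1}{\lambda \|a\|_\infty}.$$ -/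
open Real MeasureTheory

lemma abs_exp_sub_one_le' {s T : ℝ} (h : |s| ≤ T) :
    |Real.exp s - 1| ≤ Real.exp T - 1 := by
  have h1 := abs_le.mp h
  rw [abs_le]
  constructor
  · have h2 : Real.exp (-T) ≤ Real.exp s := Real.exp_le_exp.mpr h1.1
    have hT : Real.exp (-T) = (Real.exp T)⁻¹ := Real.exp_neg T
    have hp := Real.exp_pos T
    rw [hT] at h2
    have : Real.exp T + (Real.exp T)⁻¹ ≥ 2 := by
      rw [ge_iff_le, ← sub_nonneg]
      have : Real.exp T + (Real.exp T)⁻¹ - 2 = (Real.exp T - 1)^2 / Real.exp T := by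
        field_simp; ring
      rw [this]
      positivity
    linarith
  · have := Real.exp_le_exp.mpr h1.2
    linarith

theorem stmt_10 {M : Type*} [MetricSpace M] [CompactSpace M]
    (lam A CL W : ℝ) (hlam : lam ∈ Set.Ioo (0:ℝ) 1) (hA : 0 < A) (hCL : 0 ≤ CL)
    (a : M → ℝ) (ha : Continuous a) (haA : ∀ x, |a x| ≤ A)
    (w : M → ℝ) (hwb : ∀ x, |w x| ≤ W)
    (hgeod : ∀ x y : M, ∃ ζ : ℝ → M, ζ (-(dist x y)) = y ∧ ζ 0 = x ∧
      ∀ s ∈ Set.Icc (-(dist x y)) 0, ∀ t ∈ Set.Icc (-(dist x y)) 0,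
        dist (ζ s) (ζ t) = |s - t|)
    (hDPP : ∀ x y : M, ∀ ζ : ℝ → M, ζ (-(dist x y)) = y → ζ 0 = x →
      (∀ s ∈ Set.Icc (-(dist x y)) 0, ∀ t ∈ Set.Icc (-(dist x y)) 0,
        dist (ζ s) (ζ t) = |s - t|) →
      ∃ ℓ : ℝ → ℝ, (∀ s, |ℓ s| ≤ CL) ∧ Continuous ℓ ∧
        w x - Real.exp (-lam * ∫ τ in (-(dist x y))..0, a (ζ τ)) * w y
          ≤ ∫ s in (-(dist x y))..0, Real.exp (-lam * ∫ τ in s..0, a (ζ τ)) * ℓ s) :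
    ∀ x y : M, |w x - w y|
      ≤ (A * W + CL) * (Real.exp (lam * A * dist x y) - 1) / (lam * A) := by
  obtain ⟨hlam0, hlam1⟩ := hlam
  have key : ∀ x y : M, w x - w y
      ≤ (A * W + CL) * (Real.exp (lam * A * dist x y) - 1) / (lam * A) := by
    intro x y
    set d := dist x y with hd
    have hd0 : (0:ℝ) ≤ d := dist_nonneg
    have hW : 0 ≤ W := le_trans (abs_nonneg _) (hwb x)
    obtain ⟨ζ, hζy, hζx, hiso⟩ := hgeod x y
    obtain ⟨ℓ, hℓ, hℓc, hineq⟩ := hDPP x y ζ hζy hζx hiso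
    set E := Real.exp (lam * A * d) with hE
    have hE1 : 1 ≤ E := by
      rw [hE]
      calc (1:ℝ) = Real.exp 0 := (Real.exp_zero).symm
      _ ≤ _ := Real.exp_le_exp.mpr (by positivity)
    -- bound on the full a-integral
    have hI : |∫ τ in (-d)..0, a (ζ τ)| ≤ A * d := by
      have := intervalIntegral.norm_integral_le_of_norm_le_const
        (C := A) (f := fun τ => a (ζ τ)) (a := -d) (b := 0)
        (fun τ _ => haA (ζ τ))
      simpa [abs_of_nonneg hd0] using this
    have hexp : |Real.exp (-lam * ∫ τ in (-d)..0, a (ζ τ)) - 1| ≤ E - 1 := by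
      apply abs_exp_sub_one_le'
      rw [abs_mul, abs_neg, abs_of_pos hlam0, mul_assoc]
      exact mul_le_mul_of_nonneg_left hI hlam0.le
    -- comparison function
    set g : ℝ → ℝ := fun s => Real.exp (-(lam * A) * s) * CL with hg
    have hgint : IntervalIntegrable g volume (-d) 0 := by
      apply Continuous.intervalIntegrable
      exact (Real.continuous_exp.comp (continuous_const.mul continuous_id)).mul
        continuous_const
    have hgval : (∫ s in (-d)..0, g s) = CL * ((E - 1) / (lam * A)) := by
      have hc : -(lam * A) ≠ 0 := neg_ne_zero.mpr (by positivity)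
      rw [hg]
      simp only [intervalIntegral.integral_mul_const]
      rw [intervalIntegral.integral_comp_mul_left (f := Real.exp) hc,
        integral_exp, hE, smul_eq_mul]
      rw [show -(lam * A) * -d = lam * A * d by ring, mul_zero, Real.exp_zero]
      field_simp
      ring
    have hptg : ∀ s ∈ Set.Icc (-d) (0:ℝ),
        Real.exp (-lam * ∫ τ in s..0, a (ζ τ)) * ℓ s ≤ g s := by
      intro s hs
      have hJ : |∫ τ in s..0, a (ζ τ)| ≤ A * (-s) := by
        have := intervalIntegral.norm_integral_le_of_norm_le_const
          (C := A) (f := fun τ => a (ζ τ)) (a := s) (b := 0)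
          (fun τ _ => haA (ζ τ))
        simpa [abs_of_nonpos hs.2] using this
      have hexps : Real.exp (-lam * ∫ τ in s..0, a (ζ τ)) ≤ Real.exp (-(lam * A) * s) := by
        apply Real.exp_le_exp.mpr
        have h1 : -lam * ∫ τ in s..0, a (ζ τ) ≤ lam * |∫ τ in s..0, a (ζ τ)| := by
          rw [neg_mul, neg_le]
          calc -(lam * |∫ τ in s..0, a (ζ τ)|) ≤ lam * -|∫ τ in s..0, a (ζ τ)| := by
                rw [mul_neg]
          _ ≤ lam * ∫ τ in s..0, a (ζ τ) :=
                mul_le_mul_of_nonneg_left (neg_abs_le _) hlam0.le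
        calc -lam * ∫ τ in s..0, a (ζ τ) ≤ lam * (A * (-s)) :=
              h1.trans (mul_le_mul_of_nonneg_left hJ hlam0.le)
        _ = -(lam * A) * s := by ring
      calc Real.exp (-lam * ∫ τ in s..0, a (ζ τ)) * ℓ s
          ≤ Real.exp (-lam * ∫ τ in s..0, a (ζ τ)) * CL :=
            mul_le_mul_of_nonneg_left ((le_abs_self _).trans (hℓ s)) (Real.exp_pos _).le
        _ ≤ g s := mul_le_mul_of_nonneg_right hexps hCL
    have hintle : (∫ s in (-d)..0, Real.exp (-lam * ∫ τ in s..0, a (ζ τ)) * ℓ s)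
        ≤ CL * ((E - 1) / (lam * A)) := by
      rw [← hgval]
      by_cases hf : IntervalIntegrable
          (fun s => Real.exp (-lam * ∫ τ in s..0, a (ζ τ)) * ℓ s) volume (-d) 0
      · exact intervalIntegral.integral_mono_on (by linarith) hf hgint hptg
      · rw [intervalIntegral.integral_undef hf]
        apply intervalIntegral.integral_nonneg (by linarith)
        intro u _
        have : (0:ℝ) ≤ CL := hCL
        positivity
    -- combine
    have hwy : |w y| ≤ W := hwb y
    have decomp : w x - w y
        = (w x - Real.exp (-lam * ∫ τ in (-d)..0, a (ζ τ)) * w y)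
          + (Real.exp (-lam * ∫ τ in (-d)..0, a (ζ τ)) - 1) * w y := by ring
    have hterm2 : (Real.exp (-lam * ∫ τ in (-d)..0, a (ζ τ)) - 1) * w y ≤ (E - 1) * W := by
      calc (Real.exp (-lam * ∫ τ in (-d)..0, a (ζ τ)) - 1) * w y
          ≤ |(Real.exp (-lam * ∫ τ in (-d)..0, a (ζ τ)) - 1) * w y| := le_abs_self _
        _ = |Real.exp (-lam * ∫ τ in (-d)..0, a (ζ τ)) - 1| * |w y| := abs_mul _ _
        _ ≤ (E - 1) * W := by
            apply mul_le_mul hexp hwy (abs_nonneg _) (by linarith)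
    have hsum : w x - w y ≤ CL * ((E - 1) / (lam * A)) + (E - 1) * W := by
      rw [decomp]
      exact add_le_add (hineq.trans hintle) hterm2
    have hfin : CL * ((E - 1) / (lam * A)) + (E - 1) * W
        ≤ (A * W + CL) * (E - 1) / (lam * A) := by
      have h1 : (E - 1) * W ≤ W * (E - 1) / lam := by
        rw [le_div_iff₀ hlam0]
        nlinarith [mul_nonneg hW (sub_nonneg.mpr hE1)]
      have h2 : (A * W + CL) * (E - 1) / (lam * A)
          = CL * ((E - 1) / (lam * A)) + W * (E - 1) / lam := by
        field_simp
        ring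
      rw [h2]
      linarith
    exact hsum.trans hfin
  intro x y
  rw [abs_sub_le_iff]
  refine ⟨key x y, ?_⟩
  have := key y x
  rwa [dist_comm y x] at this
end

section
/- Let $\delta \in (0,1)$, $\lambda > 0$, $K > 0$, and let $f : (-\infty, 0] \to \mathbb{R}$ be continuous with $|f| \le K$. Suppose there is an increasing sequence $t_n \to +\infty$ with $e^{-\lambda \int_{-t_n}^0 f(\tau)\,d\tau} \ge \delta$ for all $n$. Then for every $n$ and every $t \in (t_n, t_n + \frac{\ln(\delta^{-1})}{\lambda K})$, we have $e^{-\lambda \int_{-t}^0 f(\tau)\,d\tau} \ge \delta^2$; consequently $\int_{-t}^0 e^{-\lambda \int_s^0 f(\tau)\,d\tau}\,ds \to +\infty$ as $t \to +\infty$. -/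
open Real MeasureTheory Filter

theorem stmt_11 (δ lam K : ℝ) (hδ : δ ∈ Set.Ioo (0:ℝ) 1) (hlam : 0 < lam) (hK : 0 < K)
    (f : ℝ → ℝ) (hf : Continuous f) (hfK : ∀ t, |f t| ≤ K)
    (t : ℕ → ℝ) (hmono : StrictMono t) (htop : Tendsto t atTop atTop)
    (hδn : ∀ n, δ ≤ Real.exp (-lam * ∫ τ in (-(t n))..0, f τ)) :
    (∀ n, ∀ s ∈ Set.Ioo (t n) (t n + Real.log δ⁻¹ / (lam * K)),
      δ ^ 2 ≤ Real.exp (-lam * ∫ τ in (-s)..0, f τ)) ∧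
    Tendsto (fun T => ∫ s in (-T)..0, Real.exp (-lam * ∫ τ in s..0, f τ))
      atTop atTop := by
  obtain ⟨hδ0, hδ1⟩ := hδ
  set r : ℝ := Real.log δ⁻¹ / (lam * K) with hrdef
  have hlamK : 0 < lam * K := mul_pos hlam hK
  have hlog : 0 < Real.log δ⁻¹ := Real.log_pos (by rw [one_lt_inv_iff₀]; exact ⟨hδ0, hδ1⟩)
  have hr0 : 0 < r := div_pos hlog hlamK
  have hint : ∀ a b : ℝ, IntervalIntegrable f volume a b := fun a b =>
    hf.intervalIntegrable a b
  have hlamKr : lam * K * r = Real.log δ⁻¹ := by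
    rw [hrdef]; field_simp
  -- key estimate on closed intervals
  have key : ∀ n, ∀ s ∈ Set.Icc (t n) (t n + r),
      δ ^ 2 ≤ Real.exp (-lam * ∫ τ in (-s)..0, f τ) := by
    intro n s hs
    have hsplit : (∫ τ in (-s)..0, f τ)
        = (∫ τ in (-s)..(-(t n)), f τ) + ∫ τ in (-(t n))..0, f τ :=
      (intervalIntegral.integral_add_adjacent_intervals (hint _ _) (hint _ _)).symm
    have hstn : 0 ≤ s - t n := by linarith [hs.1]
    have habs : |∫ τ in (-s)..(-(t n)), f τ| ≤ K * (s - t n) := by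
      have h := intervalIntegral.norm_integral_le_of_norm_le_const
        (a := -s) (b := -(t n)) (C := K) (f := f) (fun x _ => by simpa using hfK x)
      rw [Real.norm_eq_abs, show (-(t n)) - (-s) = s - t n by ring,
        abs_of_nonneg hstn] at h
      exact h
    have h1 : δ ≤ Real.exp (-lam * ∫ τ in (-s)..(-(t n)), f τ) := by
      have hA : -lam * ∫ τ in (-s)..(-(t n)), f τ ≥ -(lam * K * r) := by
        have h2 : (∫ τ in (-s)..(-(t n)), f τ) ≤ K * (s - t n) := le_of_abs_le habs
        have h3 : K * (s - t n) ≤ K * r := by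
          have := hs.2
          nlinarith
        nlinarith
      calc δ = Real.exp (-(lam * K * r)) := by
              rw [hlamKr, Real.log_inv, neg_neg, Real.exp_log hδ0]
        _ ≤ _ := Real.exp_le_exp.mpr hA
    have h2 := hδn n
    have : δ * δ ≤ Real.exp (-lam * ∫ τ in (-s)..(-(t n)), f τ)
        * Real.exp (-lam * ∫ τ in (-(t n))..0, f τ) :=
      mul_le_mul h1 h2 hδ0.le (Real.exp_pos _).le
    calc δ ^ 2 = δ * δ := sq δ
      _ ≤ _ := this
      _ = Real.exp (-lam * ∫ τ in (-s)..0, f τ) := by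
          rw [← Real.exp_add, hsplit]; ring_nf
  refine ⟨fun n s hs => key n s ⟨hs.1.le, hs.2.le⟩, ?_⟩
  -- continuity / integrability of the integrand
  set g : ℝ → ℝ := fun s => Real.exp (-lam * ∫ τ in s..0, f τ) with hgdef
  have hg : Continuous g := by
    have h1 : Continuous fun s => ∫ τ in s..0, f τ := by
      have h2 : Continuous fun s => ∫ τ in (0:ℝ)..s, f τ :=
        intervalIntegral.continuous_primitive hint 0
      have : (fun s => ∫ τ in s..0, f τ) = fun s => -∫ τ in (0:ℝ)..s, f τ := by
        funext s; rw [intervalIntegral.integral_symm]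
      rw [this]; exact h2.neg
    exact Real.continuous_exp.comp (continuous_const.mul h1)
  have hgpos : ∀ x, 0 < g x := fun x => Real.exp_pos _
  have hgint : ∀ a b : ℝ, IntervalIntegrable g volume a b := fun a b =>
    hg.intervalIntegrable a b
  set F : ℝ → ℝ := fun T => ∫ s in (-T)..0, g s with hFdef
  have hFsplit : ∀ a b : ℝ, F b = (∫ s in (-b)..(-a), g s) + F a := fun a b =>
    (intervalIntegral.integral_add_adjacent_intervals (hgint _ _) (hgint _ _)).symm
  have hmonoF : Monotone F := by
    intro a b hab
    have h0 : 0 ≤ ∫ s in (-b)..(-a), g s :=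
      intervalIntegral.integral_nonneg (by linarith) (fun x _ => (hgpos x).le)
    have := hFsplit a b
    linarith
  -- chunk estimate
  have chunk : ∀ n, ∀ a, a ≤ t n → F a + r * δ ^ 2 ≤ F (t n + r) := by
    intro n a ha
    have h1 : (∫ s in (-(t n + r))..(-(t n)), (δ ^ 2 : ℝ))
        ≤ ∫ s in (-(t n + r))..(-(t n)), g s := by
      apply intervalIntegral.integral_mono_on (by linarith)
        (intervalIntegrable_const) (hgint _ _)
      intro x hx
      obtain ⟨hxa, hxb⟩ := hx
      have hx1 : t n ≤ -x := by linarith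
      have hx2 : -x ≤ t n + r := by linarith
      have := key n (-x) ⟨hx1, hx2⟩
      simpa [hgdef] using this
    have hconst : (∫ s in (-(t n + r))..(-(t n)), (δ ^ 2 : ℝ)) = r * δ ^ 2 := by
      rw [intervalIntegral.integral_const, smul_eq_mul,
        show (-(t n)) - (-(t n + r)) = r by ring]
    have h2 : 0 ≤ ∫ s in (-(t n))..(-a), g s :=
      intervalIntegral.integral_nonneg (by linarith) (fun x _ => (hgpos x).le)
    have hsp1 := hFsplit a (t n + r)
    have hsp2 : (∫ s in (-(t n + r))..(-a), g s)
        = (∫ s in (-(t n + r))..(-(t n)), g s) + ∫ s in (-(t n))..(-a), g s :=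
      (intervalIntegral.integral_add_adjacent_intervals (hgint _ _) (hgint _ _)).symm
    rw [hsp1, hsp2]
    linarith [hconst ▸ h1]
  -- build a sparse subsequence
  have exists_ge : ∀ c : ℝ, ∃ n, c ≤ t n := fun c =>
    (htop.eventually (eventually_ge_atTop c)).exists
  let u : ℕ → ℕ := fun k => Nat.rec (Classical.choose (exists_ge 0))
    (fun _ prev => Classical.choose (exists_ge (t prev + r))) k
  have hu0 : (0:ℝ) ≤ t (u 0) := Classical.choose_spec (exists_ge 0)
  have hustep : ∀ k, t (u k) + r ≤ t (u (k + 1)) := fun k =>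
    Classical.choose_spec (exists_ge (t (u k) + r))
  have hF0 : 0 ≤ F (t (u 0)) :=
    intervalIntegral.integral_nonneg (by linarith) (fun x _ => (hgpos x).le)
  have hlower : ∀ k : ℕ, (k + 1 : ℝ) * (r * δ ^ 2) ≤ F (t (u k) + r) := by
    intro k
    induction k with
    | zero =>
        have := chunk (u 0) (t (u 0)) le_rfl
        push_cast
        linarith
    | succ k ih =>
        have := chunk (u (k + 1)) (t (u k) + r) (hustep k)
        push_cast at ih ⊢
        linarith
  apply tendsto_atTop_atTop_of_monotone hmonoF
  intro b
  have hrδ : 0 < r * δ ^ 2 := mul_pos hr0 (pow_pos hδ0 2)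
  obtain ⟨k, hk⟩ := exists_nat_ge (b / (r * δ ^ 2))
  refine ⟨t (u k) + r, ?_⟩
  have hb : b ≤ (k : ℝ) * (r * δ ^ 2) := by
    rwa [div_le_iff₀ hrδ] at hk
  have : (k : ℝ) * (r * δ ^ 2) ≤ (k + 1 : ℝ) * (r * δ ^ 2) := by nlinarith
  linarith [hlower k]
end

section
/- Let $L : TM \to \mathbb{R}$ be continuous and, for each fixed $x$, superlinear in $v$: for every $T > 0$ there exists $C_T \in \mathbb{R}$ with $L(x, v) \ge T\|v\|_x + C_T$ for all $(x,v)$. Let $\kappa > 0$, $c \in \mathbb{R}$, $K' \ge 0$, and let $u : M \to \mathbb{R}$ be $\kappa$-Lipschitz. Suppose $\gamma : (-\infty, 0] \to M$ is an absolutely continuous curve such that for all $s < t \le 0$, $$u(\gamma(t)) - u(\gamma(s)) \ge \int_s^t \big[(\kappa + 1)\|\dot\gamma(\tau)\|_{\gamma(\tau)} + C_{\kappa+1}\big]\,d\tau + (c - K')(t - s).$$ Then $\gamma$ is Lipschitz with constant $K' - c - C_{\kappa+1}$: $d(\gamma(t), \gamma(s)) \le (K' - c - C_{\kappa+1})(t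 - s)$ for all $s < t \le 0$. -/
open Real MeasureTheory

theorem stmt_12 {M : Type*} [MetricSpace M]
    (κ CL c K' : ℝ) (hκ : 0 < κ) (hK' : 0 ≤ K')
    (u : M → ℝ) (hu : ∀ x y, |u x - u y| ≤ κ * dist x y)
    (γ : ℝ → M) (v : ℝ → ℝ) (hv : ∀ s, 0 ≤ v s)
    (hvint : ∀ s t : ℝ, IntervalIntegrable v MeasureTheory.volume s t)
    (hlen : ∀ s t : ℝ, s ≤ t → dist (γ s) (γ t) ≤ ∫ τ in s..t, v τ)
    (hcal : ∀ s t : ℝ, s < t → t ≤ 0 →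
      (∫ τ in s..t, ((κ + 1) * v τ + CL)) + (c - K') * (t - s) ≤ u (γ t) - u (γ s)) :
    ∀ s t : ℝ, s < t → t ≤ 0 → dist (γ t) (γ s) ≤ (K' - c - CL) * (t - s) := by
  intro s t hst ht0
  have hI := hcal s t hst ht0
  have hsplit : (∫ τ in s..t, ((κ + 1) * v τ + CL))
      = (κ + 1) * (∫ τ in s..t, v τ) + CL * (t - s) := by
    rw [intervalIntegral.integral_add ((hvint s t).const_mul _)
      intervalIntegrable_const, intervalIntegral.integral_const_mul,
      intervalIntegral.integral_const, smul_eq_mul]; ring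
  have hd : dist (γ s) (γ t) ≤ ∫ τ in s..t, v τ := hlen s t hst.le
  have hu' : u (γ t) - u (γ s) ≤ κ * (∫ τ in s..t, v τ) := by
    have := (abs_le.mp (hu (γ t) (γ s))).2
    have hκd : κ * dist (γ t) (γ s) ≤ κ * (∫ τ in s..t, v τ) := by
      rw [dist_comm]; exact mul_le_mul_of_nonneg_left hd hκ.le
    linarith
  have hInt : (∫ τ in s..t, v τ) ≤ (K' - c - CL) * (t - s) := by
    rw [hsplit] at hI; nlinarith
  calc dist (γ t) (γ s) ≤ ∫ τ in s..t, v τ := by rw [dist_comm]; exact hd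
    _ ≤ _ := hInt
end

section
/- Let $M$ be compact, $L : TM \to \mathbb{R}$ continuous with $C_L := \max\{|L(x,v) + c_0| : \|v\|_x \le 1\} < \infty$, $a : M \to \mathbb{R}$ continuous with a point $x_0$ where $a(x_0) > 0$, and $\lambda \in (0,1)$. For $x \in M$ let $d = d(x_0, x)$ and let $\zeta : [-d, 0] \to M$ be a unit-speed geodesic from $x_0$ to $x$; extend it by the constant $x_0$ on $(-\infty, -d)$ to obtain $\bar\gamma : (-\infty, 0] \to M$. Then $$\limsup_{t \to +\infty} \int_{-t}^0 e^{-\lambda \int_s^0 a(\bar\gamma(\tau))\,d\tau}\,(L(\bar\gamma(s), \dot{\bar\gamma}(s)) + c_0)\,ds \le \frac{2 C_L\, e^{\|a\|_\infty \overline{D}}}{\lambda\, a(x_0)},$$ where $\overline{D} = \mathrm{diam}(M)$. In particular the value function $V_\lambda(x)$ (infimum of the limsup over all curves ending at $x$) satisfies $V_\lambda(x) \le \widehat{C}^+_v / \lambda$ with $\widehat{C}^+_v = 2 C_L e^{\|a\|_\infty \overline{D}} / a(x_0)$, for all $x$ and $\lambda \in (0,1)$. -/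
open Real MeasureTheory Filter Set

/-!
Write `w(s) = exp (-λ ∫ₛ⁰ a(γ τ) dτ)` for the discount factor. Since `a ≥ -A`, on the geodesic
part `[-d, 0]` we have `w(s) ≤ e^{-λAs}`, whose integral is at most `e^{λAd}/(λA)`. On the
resting part `s ≤ -d` the curve sits at `x₀`, so `w(s) = w(-d) e^{λ a(x₀)(s+d)}` with
`w(-d) ≤ e^{λAd}`, and the integral over `[-t, -d]` is at most `e^{λAd}/(λ a(x₀))` for every `t`.
As `a(x₀) ≤ A` and `λ d ≤ D̄`, the integral of `w · ℓ` is bounded in absolute value by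
`2 C_L e^{A D̄}/(λ a(x₀))` for all `t ≥ d`, which bounds the limsup. Since `γ` is only controlled
on `(-∞, 0]`, it is first replaced by a continuous curve on `ℝ` that agrees with it there.
-/

lemma integral_exp_mul_of_ne_zero {c : ℝ} (hc : c ≠ 0) (u v : ℝ) :
    ∫ s in u..v, exp (c * s) = (exp (c * v) - exp (c * u)) / c := by
  rw [intervalIntegral.integral_comp_mul_left exp hc, integral_exp, smul_eq_mul]
  field_simp

lemma integral_exp_mul_le {c : ℝ} (hc : 0 < c) (u v : ℝ) :
    ∫ s in u..v, exp (c * s) ≤ exp (c * v) / c := by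
  rw [integral_exp_mul_of_ne_zero hc.ne']
  gcongr
  linarith [exp_pos (c * u)]

lemma integral_exp_neg_mul_le {c : ℝ} (hc : 0 < c) (u v : ℝ) :
    ∫ s in u..v, exp (-c * s) ≤ exp (-c * u) / c := by
  rw [integral_exp_mul_of_ne_zero (neg_ne_zero.2 hc.ne'), div_neg, ← neg_div, neg_sub]
  gcongr
  linarith [exp_pos (-c * v)]

noncomputable def discountFactor (lam : ℝ) (f : ℝ → ℝ) (s : ℝ) : ℝ :=
  exp (-lam * ∫ τ in s..0, f τ)

section discountFactor

variable {lam A b d s t : ℝ} {f : ℝ → ℝ}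

lemma discountFactor_pos : 0 < discountFactor lam f s := exp_pos _

lemma discountFactor_congr {g : ℝ → ℝ} (hfg : EqOn f g (Iic 0)) (hs : s ≤ 0) :
    discountFactor lam f s = discountFactor lam g s := by
  unfold discountFactor
  rw [intervalIntegral.integral_congr fun τ hτ => hfg (uIcc_of_le hs ▸ hτ).2]

lemma continuous_discountFactor (hf : ∀ u v, IntervalIntegrable f volume u v) :
    Continuous (discountFactor lam f) := by
  have : Continuous fun s => ∫ τ in s..0, f τ := by
    simpa only [intervalIntegral.integral_symm _ (0 : ℝ), Pi.neg_def, neg_neg] using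
      (intervalIntegral.continuous_primitive hf 0).neg
  exact continuous_exp.comp (continuous_const.mul this)

lemma discountFactor_le (hlam : 0 ≤ lam) (hf : IntervalIntegrable f volume s 0)
    (hfA : ∀ τ, -A ≤ f τ) (hs : s ≤ 0) :
    discountFactor lam f s ≤ exp (-(lam * A) * s) := by
  have : (0 - s) * -A ≤ ∫ τ in s..0, f τ := by
    simpa using intervalIntegral.integral_mono_on hs intervalIntegrable_const hf
      (fun τ _ => hfA τ)
  exact exp_le_exp.2 (by nlinarith)

lemma discountFactor_eq_of_le (hf : ∀ u v, IntervalIntegrable f volume u v)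
    (hfb : ∀ τ ≤ -d, f τ = b) (hs : s ≤ -d) :
    discountFactor lam f s = discountFactor lam f (-d) * exp (lam * b * (s + d)) := by
  have hconst : ∫ τ in s..(-d), f τ = (-d - s) * b := by
    rw [intervalIntegral.integral_congr (g := fun _ => b), intervalIntegral.integral_const,
      smul_eq_mul]
    intro τ hτ
    rw [uIcc_of_le hs] at hτ
    exact hfb τ hτ.2
  unfold discountFactor
  rw [← intervalIntegral.integral_add_adjacent_intervals (hf s (-d)) (hf (-d) 0), hconst,
    ← exp_add]
  ring_nf

lemma integral_discountFactor_le_of_ge (hlam : 0 < lam) (hA : 0 < A) (hd : 0 ≤ d)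
    (hf : ∀ u v, IntervalIntegrable f volume u v) (hfA : ∀ τ, -A ≤ f τ) :
    ∫ s in (-d)..0, discountFactor lam f s ≤ exp (lam * A * d) / (lam * A) :=
  calc ∫ s in (-d)..0, discountFactor lam f s ≤ ∫ s in (-d)..0, exp (-(lam * A) * s) :=
        intervalIntegral.integral_mono_on (by linarith)
          ((continuous_discountFactor hf).intervalIntegrable _ _)
          ((by fun_prop : Continuous fun s => exp (-(lam * A) * s)).intervalIntegrable _ _)
          fun s hs => discountFactor_le hlam.le (hf s 0) hfA hs.2
    _ ≤ exp (-(lam * A) * -d) / (lam * A) := integral_exp_neg_mul_le (by positivity) _ _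
    _ = exp (lam * A * d) / (lam * A) := by ring_nf

lemma integral_discountFactor_le_of_const (hlam : 0 < lam) (hb : 0 < b) (hd : 0 ≤ d) (hdt : d ≤ t)
    (hf : ∀ u v, IntervalIntegrable f volume u v) (hfA : ∀ τ, -A ≤ f τ)
    (hfb : ∀ τ ≤ -d, f τ = b) :
    ∫ s in (-t)..(-d), discountFactor lam f s ≤ exp (lam * A * d) / (lam * b) := by
  have hweight : discountFactor lam f (-d) ≤ exp (lam * A * d) := by
    simpa using discountFactor_le hlam.le (hf _ _) hfA (neg_nonpos.2 hd)
  calc ∫ s in (-t)..(-d), discountFactor lam f s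
      = discountFactor lam f (-d) * ∫ s in (-t)..(-d), exp (lam * b * (s + d)) := by
        rw [← intervalIntegral.integral_const_mul]
        refine intervalIntegral.integral_congr fun s hs => ?_
        rw [uIcc_of_le (by linarith)] at hs
        exact discountFactor_eq_of_le hf hfb hs.2
    _ ≤ exp (lam * A * d) * (1 / (lam * b)) := by
        gcongr
        · exact intervalIntegral.integral_nonneg (by linarith) fun s _ => (exp_pos _).le
        · rw [intervalIntegral.integral_comp_add_right (fun s => exp (lam * b * s)) d,
            neg_add_cancel]
          simpa using integral_exp_mul_le (mul_pos hlam hb) (-t + d) 0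
    _ = exp (lam * A * d) / (lam * b) := by ring

lemma integral_discountFactor_le (hlam : 0 < lam) (hb : 0 < b) (hbA : b ≤ A) (hd : 0 ≤ d)
    (hdt : d ≤ t) (hf : ∀ u v, IntervalIntegrable f volume u v) (hfA : ∀ τ, -A ≤ f τ)
    (hfb : ∀ τ ≤ -d, f τ = b) :
    ∫ s in (-t)..0, discountFactor lam f s ≤ 2 * exp (lam * A * d) / (lam * b) := by
  have hnear : exp (lam * A * d) / (lam * A) ≤ exp (lam * A * d) / (lam * b) := by gcongr
  rw [← intervalIntegral.integral_add_adjacent_intervals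
    ((continuous_discountFactor hf).intervalIntegrable _ (-d))
    ((continuous_discountFactor hf).intervalIntegrable _ _), mul_div_assoc]
  linarith [integral_discountFactor_le_of_const hlam hb hd hdt hf hfA hfb,
    integral_discountFactor_le_of_ge hlam (hb.trans_le hbA) hd hf hfA]

end discountFactor

lemma abs_integral_mul_le_mul_integral {u v C : ℝ} {w ℓ : ℝ → ℝ} (huv : u ≤ v)
    (hw0 : ∀ s, 0 ≤ w s) (hw : IntervalIntegrable w volume u v) (hℓ : ∀ s, |ℓ s| ≤ C) :
    |∫ s in u..v, w s * ℓ s| ≤ C * ∫ s in u..v, w s := by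
  rw [← Real.norm_eq_abs, ← intervalIntegral.integral_const_mul]
  refine intervalIntegral.norm_integral_le_of_norm_le huv (ae_of_all volume fun s _ => ?_)
    (hw.const_mul C)
  rw [Real.norm_eq_abs, abs_mul, abs_of_nonneg (hw0 s), mul_comm C]
  exact mul_le_mul_of_nonneg_left (hℓ s) (hw0 s)

lemma Filter.limsup_le_of_eventually_abs_le {ι : Type*} {l : Filter ι} [l.NeBot] {u : ι → ℝ}
    {C : ℝ} (h : ∀ᶠ t in l, |u t| ≤ C) : limsup u l ≤ C :=
  limsup_le_of_le (isCoboundedUnder_le_of_eventually_le l (h.mono fun _ ht => (abs_le.1 ht).1))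
    (h.mono fun _ ht => (le_abs_self _).trans ht)

lemma exists_continuous_eqOn_Iic {M : Type*} [TopologicalSpace M] {γ : ℝ → M} {d : ℝ} {x0 : M}
    (hd : 0 ≤ d) (hγ : ContinuousOn γ (Icc (-d) 0)) (hconst : ∀ t ≤ -d, γ t = x0) :
    ∃ Γ : ℝ → M, Continuous Γ ∧ EqOn Γ γ (Iic 0) := by
  have hd' : -d ≤ 0 := neg_nonpos.2 hd
  refine ⟨IccExtend hd' ((Icc (-d) 0).domRestrict γ),
    (continuousOn_iff_continuous_domRestrict.1 hγ).Icc_extend', fun t (ht : t ≤ 0) => ?_⟩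
  rcases le_total t (-d) with htd | htd
  · rw [IccExtend_of_le_left _ _ htd, domRestrict_apply, hconst t htd, hconst _ le_rfl]
  · exact IccExtend_of_mem _ _ ⟨htd, ht⟩

theorem stmt_13_general {M : Type*} [MetricSpace M]
    (lam A CL Dbar : ℝ) (hlam : lam ∈ Set.Ioo (0:ℝ) 1)
    (a : M → ℝ) (ha : Continuous a) (haA : ∀ z, |a z| ≤ A)
    (hD : ∀ z y : M, dist z y ≤ Dbar)
    (x0 x : M) (hx0 : 0 < a x0)
    (γ : ℝ → M)
    (hγgeod : ∀ s ∈ Set.Icc (-(dist x0 x)) 0, ∀ t ∈ Set.Icc (-(dist x0 x)) 0,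
      dist (γ s) (γ t) = |s - t|)
    (hγconst : ∀ t ≤ -(dist x0 x), γ t = x0)
    (ℓ : ℝ → ℝ) (hℓCL : ∀ s, |ℓ s| ≤ CL) :
    Filter.limsup (fun t => ∫ s in (-t)..0, Real.exp (-lam * ∫ τ in s..0, a (γ τ)) * ℓ s)
        Filter.atTop
      ≤ 2 * CL * Real.exp (A * Dbar) / (lam * a x0) := by
  obtain ⟨hlam0, hlam1⟩ := hlam
  set d := dist x0 x
  have hd : 0 ≤ d := dist_nonneg
  have hγ : ContinuousOn γ (Icc (-d) 0) :=
    (LipschitzOnWith.of_dist_le_mul (K := 1) fun s hs t ht => by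
      simp [hγgeod s hs t ht, Real.dist_eq]).continuousOn
  obtain ⟨Γ, hΓ, hΓγ⟩ := exists_continuous_eqOn_Iic hd hγ hγconst
  have hf : ∀ u v, IntervalIntegrable (a ∘ Γ) volume u v :=
    fun u v => (ha.comp hΓ).intervalIntegrable u v
  have hA : 0 ≤ A := (abs_nonneg _).trans (haA x0)
  have hCL : 0 ≤ CL := (abs_nonneg _).trans (hℓCL 0)
  have hexp : exp (lam * A * d) ≤ exp (A * Dbar) :=
    exp_le_exp.2 (by nlinarith [mul_nonneg hA hd, mul_le_mul_of_nonneg_left (hD x0 x) hA])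
  refine limsup_le_of_eventually_abs_le (eventually_atTop.2 ⟨d, fun t hdt => ?_⟩)
  have ht : -t ≤ 0 := by linarith
  calc |∫ s in (-t)..0, exp (-lam * ∫ τ in s..0, a (γ τ)) * ℓ s|
      = |∫ s in (-t)..0, discountFactor lam (a ∘ Γ) s * ℓ s| := by
        rw [intervalIntegral.integral_congr fun s hs => ?_]
        exact congrArg (· * ℓ s) (discountFactor_congr (fun τ hτ => congrArg a (hΓγ hτ).symm)
          (uIcc_of_le ht ▸ hs).2)
    _ ≤ CL * ∫ s in (-t)..0, discountFactor lam (a ∘ Γ) s :=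
        abs_integral_mul_le_mul_integral ht (fun _ => discountFactor_pos.le)
          ((continuous_discountFactor hf).intervalIntegrable _ _) hℓCL
    _ ≤ CL * (2 * exp (lam * A * d) / (lam * a x0)) := by
        gcongr
        exact integral_discountFactor_le hlam0 hx0 ((le_abs_self _).trans (haA x0)) hd hdt hf
          (fun τ => (abs_le.1 (haA _)).1)
          (fun τ hτ => by simp [hΓγ (hτ.trans (neg_nonpos.2 hd)), hγconst τ hτ])
    _ ≤ 2 * CL * exp (A * Dbar) / (lam * a x0) := by
        rw [mul_div_assoc', ← mul_assoc, mul_comm CL]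
        gcongr

theorem stmt_13 {M : Type*} [MetricSpace M] [CompactSpace M]
    (lam A CL Dbar : ℝ) (hlam : lam ∈ Set.Ioo (0:ℝ) 1) (hCL : 0 < CL) (hA : 0 < A)
    (a : M → ℝ) (ha : Continuous a) (haA : ∀ z, |a z| ≤ A)
    (hD : ∀ z y : M, dist z y ≤ Dbar)
    (x0 x : M) (hx0 : 0 < a x0)
    (γ : ℝ → M) (hγ0 : γ 0 = x)
    (hγgeod : ∀ s ∈ Set.Icc (-(dist x0 x)) 0, ∀ t ∈ Set.Icc (-(dist x0 x)) 0,
      dist (γ s) (γ t) = |s - t|)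
    (hγconst : ∀ t ≤ -(dist x0 x), γ t = x0)
    (ℓ : ℝ → ℝ) (hℓ : Continuous ℓ) (hℓCL : ∀ s, |ℓ s| ≤ CL) :
    Filter.limsup (fun t => ∫ s in (-t)..0, Real.exp (-lam * ∫ τ in s..0, a (γ τ)) * ℓ s)
        Filter.atTop
      ≤ 2 * CL * Real.exp (A * Dbar) / (lam * a x0) :=
  stmt_13_general lam A CL Dbar hlam a ha haA hD x0 x hx0 γ hγgeod hγconst ℓ hℓCL
end
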